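/- If G and H are compatible !-tensors (identical free edge names, the same !-box names with identical immediate-nesting relation, and equal contexts on all free edge names), then Wk_A^K(G) and Wk_A^K(H) are compatible !-tensors. -/

import Mathlib

/-!
Shared infrastructure for !-tensor expressions (Kissinger & Quick,
"Tensors, !-graphs, and non-commutative quantum structures").
-/

namespace BangTensor

/-- Edge names. -/
abbrev EdgeName : Type := ℕ
/-- !-box names (a set disjoint from edge names; modelled as a separate sort). -/
abbrev BoxName : Type := ℕ

/-- Directed edges: an output `â` or an input `ǎ`. -/
inductive DirEdge : Type
  | out (a : EdgeName)
  | inp (a : EdgeName)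
  deriving DecidableEq

namespace DirEdge

def name : DirEdge → EdgeName
  | out a => a
  | inp a => a

def partner : DirEdge → DirEdge
  | out a => inp a
  | inp a => out a

def rename (f : EdgeName → EdgeName) : DirEdge → DirEdge
  | out a => out (f a)
  | inp a => inp (f a)

end DirEdge

/-- A freshness function: a pair of bijections on edge names and !-box names. -/
structure Freshness : Type where
  em : EdgeName ≃ EdgeName
  bm : BoxName ≃ BoxName

/-- Edgeterms: built from the empty edgeterm, directed edges, clockwise
and anticlockwise edge groups, and concatenation. -/
inductive EdgeTerm : Type
  | eps
  | edge (d : DirEdge)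
  | cw (e : EdgeTerm) (A : BoxName)
  | acw (e : EdgeTerm) (A : BoxName)
  | cat (e f : EdgeTerm)
  deriving DecidableEq

namespace EdgeTerm

/-- Number of occurrences of a directed edge in an edgeterm. -/
def count (d : DirEdge) : EdgeTerm → ℕ
  | eps => 0
  | edge d' => if d' = d then 1 else 0
  | cw e _ => e.count d
  | acw e _ => e.count d
  | cat e f => e.count d + f.count d

/-- Edge context of a directed edge inside an edgeterm: the list of !-boxes
(edge groups) containing it, inside-out. -/
def ectx (d : DirEdge) : EdgeTerm → Option (List BoxName)
  | eps => none
  | edge d' => if d' = d then some [] else none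
  | cw e A => (e.ectx d).map (· ++ [A])
  | acw e A => (e.ectx d).map (· ++ [A])
  | cat e f => (e.ectx d).orElse (fun _ => f.ectx d)

def edgeNames : EdgeTerm → Set EdgeName
  | eps => ∅
  | edge d => {d.name}
  | cw e _ => e.edgeNames
  | acw e _ => e.edgeNames
  | cat e f => e.edgeNames ∪ f.edgeNames

def boxNames : EdgeTerm → Set BoxName
  | eps => ∅
  | edge _ => ∅
  | cw e A => insert A e.boxNames
  | acw e A => insert A e.boxNames
  | cat e f => e.boxNames ∪ f.boxNames

def rename (f : EdgeName → EdgeName) (g : BoxName → BoxName) : EdgeTerm → EdgeTerm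
  | eps => eps
  | edge d => edge (d.rename f)
  | cw e A => cw (e.rename f g) (g A)
  | acw e A => acw (e.rename f g) (g A)
  | cat e f' => cat (e.rename f g) (f'.rename f g)

/-- Rename the output edge `b̂` to `ĉ`. -/
def renameOut (b c : EdgeName) : EdgeTerm → EdgeTerm
  | eps => eps
  | edge (.out a) => edge (.out (if a = b then c else a))
  | edge (.inp a) => edge (.inp a)
  | cw e A => cw (e.renameOut b c) A
  | acw e A => acw (e.renameOut b c) A
  | cat e f => cat (e.renameOut b c) (f.renameOut b c)

/-- Rename the input edge `b̌` to `č`. -/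
def renameInp (b c : EdgeName) : EdgeTerm → EdgeTerm
  | eps => eps
  | edge (.out a) => edge (.out a)
  | edge (.inp a) => edge (.inp (if a = b then c else a))
  | cw e A => cw (e.renameInp b c) A
  | acw e A => acw (e.renameInp b c) A
  | cat e f => cat (e.renameInp b c) (f.renameInp b c)

/-- The operation `Kill_A` on edgeterms. -/
def kill (A : BoxName) : EdgeTerm → EdgeTerm
  | eps => eps
  | edge d => edge d
  | cw e B => if B = A then eps else cw (e.kill A) B
  | acw e B => if B = A then eps else acw (e.kill A) B
  | cat e f => cat (e.kill A) (f.kill A)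

/-- The operation `Drop_A` on edgeterms. -/
def drop (A : BoxName) : EdgeTerm → EdgeTerm
  | eps => eps
  | edge d => edge d
  | cw e B => if B = A then e else cw (e.drop A) B
  | acw e B => if B = A then e else acw (e.drop A) B
  | cat e f => cat (e.drop A) (f.drop A)

/-- The operation `Exp_{A,fr}` on edgeterms. -/
def exp (A : BoxName) (fr : Freshness) : EdgeTerm → EdgeTerm
  | eps => eps
  | edge d => edge d
  | cw e B => if B = A then cat (cw e B) (e.rename fr.em fr.bm) else cw (e.exp A fr) B
  | acw e B => if B = A then cat (e.rename fr.em fr.bm) (acw e B) else acw (e.exp A fr) B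
  | cat e f => cat (e.exp A fr) (f.exp A fr)

/-- The operation `Copy_{A,fr}` on edgeterms. -/
def copy (A : BoxName) (fr : Freshness) : EdgeTerm → EdgeTerm
  | eps => eps
  | edge d => edge d
  | cw e B =>
      if B = A then cat (cw e B) (cw (e.rename fr.em fr.bm) (fr.bm A)) else cw (e.copy A fr) B
  | acw e B =>
      if B = A then cat (acw (e.rename fr.em fr.bm) (fr.bm A)) (acw e B) else acw (e.copy A fr) B
  | cat e f => cat (e.copy A fr) (f.copy A fr)

/-- An edgeterm with no edge groups (a concrete edgeterm). -/
def noGroups : EdgeTerm → Prop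
  | eps => True
  | edge _ => True
  | cw _ _ => False
  | acw _ _ => False
  | cat e f => e.noGroups ∧ f.noGroups

/-- Equivalence of edgeterms: associativity and unit laws for concatenation,
and removal of empty edge groups; closed under congruence. -/
inductive Equiv : EdgeTerm → EdgeTerm → Prop
  | refl (e) : Equiv e e
  | symm {e f} : Equiv e f → Equiv f e
  | trans {e f g} : Equiv e f → Equiv f g → Equiv e g
  | cat_congr {e e' f f'} : Equiv e e' → Equiv f f' → Equiv (cat e f) (cat e' f')
  | cw_congr {e e'} (A) : Equiv e e' → Equiv (cw e A) (cw e' A)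
  | acw_congr {e e'} (A) : Equiv e e' → Equiv (acw e A) (acw e' A)
  | assoc (e f g) : Equiv (cat (cat e f) g) (cat e (cat f g))
  | unit_left (e) : Equiv (cat eps e) e
  | unit_right (e) : Equiv (cat e eps) e
  | cw_eps (A) : Equiv (cw eps A) eps
  | acw_eps (A) : Equiv (acw eps A) eps

end EdgeTerm

/-- !-pretensor expressions over a signature `σ`. -/
inductive Pretensor (σ : Type) : Type
  | unit
  | idt (a b : EdgeName)
  | gen (φ : σ) (e : EdgeTerm)
  | box (G : Pretensor σ) (A : BoxName)
  | prod (G H : Pretensor σ)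

namespace Pretensor

variable {σ : Type}

def edgeCount (d : DirEdge) : Pretensor σ → ℕ
  | unit => 0
  | idt a b => (if d = DirEdge.out a then 1 else 0) + (if d = DirEdge.inp b then 1 else 0)
  | gen _ e => e.count d
  | box G _ => G.edgeCount d
  | prod G H => G.edgeCount d + H.edgeCount d

def boxCount (A : BoxName) : Pretensor σ → ℕ
  | unit => 0
  | idt _ _ => 0
  | gen _ _ => 0
  | box G B => (if B = A then 1 else 0) + G.boxCount A
  | prod G H => G.boxCount A + H.boxCount A

/-- The pair (edge context, node context) of a directed edge, if it occurs. -/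
def ctx2 (d : DirEdge) : Pretensor σ → Option (List BoxName × List BoxName)
  | unit => none
  | idt a b => if d = DirEdge.out a ∨ d = DirEdge.inp b then some ([], []) else none
  | gen _ e => (e.ectx d).map (fun l => (l, []))
  | box G A => (G.ctx2 d).map (fun p => (p.1, p.2 ++ [A]))
  | prod G H => (G.ctx2 d).orElse (fun _ => H.ctx2 d)

/-- The edge context of a directed edge. -/
def ectxOf (G : Pretensor σ) (d : DirEdge) : Option (List BoxName) := (G.ctx2 d).map (·.1)

/-- The node context of a directed edge. -/
def nctxOf (G : Pretensor σ) (d : DirEdge) : Option (List BoxName) := (G.ctx2 d).map (·.2)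

/-- The (total) context of a directed edge: edge context followed by node context. -/
def ctxOf (G : Pretensor σ) (d : DirEdge) : Option (List BoxName) :=
  (G.ctx2 d).map (fun p => p.1 ++ p.2)

/-- The list of !-boxes enclosing the !-box `A`, inside-out, if `A` occurs. -/
def boxCtx (A : BoxName) : Pretensor σ → Option (List BoxName)
  | unit => none
  | idt _ _ => none
  | gen _ _ => none
  | box G B => if B = A then some [] else (G.boxCtx A).map (· ++ [B])
  | prod G H => (G.boxCtx A).orElse (fun _ => H.boxCtx A)

/-- `A ≺_G B`: the !-box `A` is nested immediately inside the !-box `B` in `G`. -/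
def Prec (G : Pretensor σ) (A B : BoxName) : Prop := ∃ l, G.boxCtx A = some (B :: l)

/-- `A` is nested (possibly not immediately) inside `B` in `G`. -/
def nestedIn (G : Pretensor σ) (A B : BoxName) : Prop := Relation.TransGen G.Prec A B

/-- `A` is a top-level !-box of `G` (it occurs and has no parent !-box). -/
def topLevel (G : Pretensor σ) (A : BoxName) : Prop := G.boxCtx A = some []

def edgeNames : Pretensor σ → Set EdgeName
  | unit => ∅
  | idt a b => {a, b}
  | gen _ e => e.edgeNames
  | box G _ => G.edgeNames
  | prod G H => G.edgeNames ∪ H.edgeNames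

def boxNames : Pretensor σ → Set BoxName
  | unit => ∅
  | idt _ _ => ∅
  | gen _ e => e.boxNames
  | box G A => insert A G.boxNames
  | prod G H => G.boxNames ∪ H.boxNames

/-- The directed edge `d` occurs in `G`. -/
def occursDir (G : Pretensor σ) (d : DirEdge) : Prop := G.edgeCount d ≠ 0

/-- The directed edge `d` is free in `G` (it occurs and its partner does not). -/
def freeDir (G : Pretensor σ) (d : DirEdge) : Prop := G.occursDir d ∧ ¬ G.occursDir d.partner

/-- The edge name `a` is free in `G`: exactly one of `â`, `ǎ` occurs in `G`. -/
def freeName (G : Pretensor σ) (a : EdgeName) : Prop :=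
  Xor' (G.occursDir (DirEdge.out a)) (G.occursDir (DirEdge.inp a))

/-- A !-tensor expression: a !-pretensor expression satisfying the freshness
conditions F1, F2 and the context conditions C1, C2, C3. -/
def IsTensorExpr (G : Pretensor σ) : Prop :=
  -- F1: each of `â` and `ǎ` occurs at most once per edge name
  (∀ d : DirEdge, G.edgeCount d ≤ 1) ∧
  -- F2: each !-box name has at most one occurrence of `[...]_A`
  (∀ A : BoxName, G.boxCount A ≤ 1) ∧
  -- C1: edge context and node context are disjoint
  (∀ (d : DirEdge) (ec nc : List BoxName), G.ctx2 d = some (ec, nc) → ec.Disjoint nc) ∧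
  -- C2: edge contexts consist of !-boxes of G, consecutively immediately nested
  (∀ (d : DirEdge) (ec nc : List BoxName), G.ctx2 d = some (ec, nc) →
    (∀ B ∈ ec, G.boxCount B ≠ 0) ∧ List.Chain' G.Prec ec) ∧
  -- C3: coherence for bound pairs
  (∀ (a : EdgeName) (eo no ei ni : List BoxName),
    G.ctx2 (DirEdge.out a) = some (eo, no) → G.ctx2 (DirEdge.inp a) = some (ei, ni) →
    ∃ es bs : List BoxName, es ++ ni = eo ++ bs ∧ es ++ no = ei ++ bs)

/-- Apply renamings of edge names and box names throughout a !-pretensor expression. -/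
def rename (f : EdgeName → EdgeName) (g : BoxName → BoxName) : Pretensor σ → Pretensor σ
  | unit => unit
  | idt a b => idt (f a) (f b)
  | gen φ e => gen φ (e.rename f g)
  | box G A => box (G.rename f g) (g A)
  | prod G H => prod (G.rename f g) (H.rename f g)

/-- Rename the output edge `b̂` to `ĉ`. -/
def renameOut (b c : EdgeName) : Pretensor σ → Pretensor σ
  | unit => unit
  | idt a y => idt (if a = b then c else a) y
  | gen φ e => gen φ (e.renameOut b c)
  | box G A => box (G.renameOut b c) A
  | prod G H => prod (G.renameOut b c) (H.renameOut b c)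

/-- Rename the input edge `b̌` to `č`. -/
def renameInp (b c : EdgeName) : Pretensor σ → Pretensor σ
  | unit => unit
  | idt a y => idt a (if y = b then c else y)
  | gen φ e => gen φ (e.renameInp b c)
  | box G A => box (G.renameInp b c) A
  | prod G H => prod (G.renameInp b c) (H.renameInp b c)

/-- Rename the edge name `a` (in both directions) to `c`. -/
def renameEdgeName (a c : EdgeName) (G : Pretensor σ) : Pretensor σ :=
  G.rename (fun x => if x = a then c else x) id

/-- Rename the !-box name `A` to `B`. -/
def renameBoxName (A B : BoxName) (G : Pretensor σ) : Pretensor σ :=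
  G.rename id (fun X => if X = A then B else X)

/-- The !-box operation `Kill_A`. -/
def kill (A : BoxName) : Pretensor σ → Pretensor σ
  | unit => unit
  | idt a b => idt a b
  | gen φ e => gen φ (e.kill A)
  | box G B => if B = A then unit else box (G.kill A) B
  | prod G H => prod (G.kill A) (H.kill A)

/-- The !-box operation `Drop_A`. -/
def drop (A : BoxName) : Pretensor σ → Pretensor σ
  | unit => unit
  | idt a b => idt a b
  | gen φ e => gen φ (e.drop A)
  | box G B => if B = A then G else box (G.drop A) B
  | prod G H => prod (G.drop A) (H.drop A)

/-- The !-box operation `Exp_{A,fr}`. -/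
def exp (A : BoxName) (fr : Freshness) : Pretensor σ → Pretensor σ
  | unit => unit
  | idt a b => idt a b
  | gen φ e => gen φ (e.exp A fr)
  | box G B => if B = A then prod (box G B) (G.rename fr.em fr.bm) else box (G.exp A fr) B
  | prod G H => prod (G.exp A fr) (H.exp A fr)

/-- The !-box operation `Copy_{A,fr}`. -/
def copy (A : BoxName) (fr : Freshness) : Pretensor σ → Pretensor σ
  | unit => unit
  | idt a b => idt a b
  | gen φ e => gen φ (e.copy A fr)
  | box G B =>
      if B = A then prod (box G B) (box (G.rename fr.em fr.bm) (fr.bm A))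
      else box (G.copy A fr) B
  | prod G H => prod (G.copy A fr) (H.copy A fr)

/-- Weakening `Wk_A^K`: add `K` inside the !-box `A`. -/
def wk (A : BoxName) (K : Pretensor σ) : Pretensor σ → Pretensor σ
  | box G B => if B = A then box (prod G K) B else box (wk A K G) B
  | prod G H => prod (wk A K G) (wk A K H)
  | G => G

/-- A concrete tensor expression: no !-boxes and no edge groups. -/
def IsConcrete : Pretensor σ → Prop
  | unit => True
  | idt _ _ => True
  | gen _ e => e.noGroups
  | box _ _ => False
  | prod G H => G.IsConcrete ∧ H.IsConcrete

/-- Nesting of !-boxes: `nest [(K₁,B₁),…,(Kₙ,Bₙ)] X = [Kₙ ⋯ [K₁ ⬝ X]_{B₁} ⋯]_{Bₙ}`. -/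
def nest : List (Pretensor σ × BoxName) → Pretensor σ → Pretensor σ
  | [], X => X
  | p :: rest, X => nest rest (box (prod p.1 X) p.2)

/-- Equivalence of !-tensor expressions: associativity, commutativity and unit
laws for product, edgeterm equivalences, renaming of bound edge names to fresh
names, and the identity-contraction laws. -/
inductive Equiv : Pretensor σ → Pretensor σ → Prop
  | refl (G) : Equiv G G
  | symm {G H} : Equiv G H → Equiv H G
  | trans {G H K} : Equiv G H → Equiv H K → Equiv G K
  | prod_congr {G G' H H'} : Equiv G G' → Equiv H H' → Equiv (prod G H) (prod G' H')
  | box_congr {G G'} (A) : Equiv G G' → Equiv (box G A) (box G' A)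
  | gen_congr (φ) {e e'} : EdgeTerm.Equiv e e' → Equiv (gen φ e) (gen φ e')
  | prod_assoc (G H K) : Equiv (prod (prod G H) K) (prod G (prod H K))
  | prod_comm (G H) : Equiv (prod G H) (prod H G)
  | prod_unit (G) : Equiv (prod G unit) G
  | bound_rename (G : Pretensor σ) (a c : EdgeName) :
      G.occursDir (DirEdge.out a) → G.occursDir (DirEdge.inp a) → c ∉ G.edgeNames →
      Equiv G (G.renameEdgeName a c)
  | contract_inp (G : Pretensor σ) (L : List (Pretensor σ × BoxName)) (a b : EdgeName) :
      G.occursDir (DirEdge.inp b) → ¬ G.occursDir (DirEdge.out b) →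
      Equiv (prod G (nest L (idt b a))) (prod (G.renameInp b a) (nest L unit))
  | contract_out (H : Pretensor σ) (L : List (Pretensor σ × BoxName)) (a b : EdgeName) :
      H.occursDir (DirEdge.out b) → ¬ H.occursDir (DirEdge.inp b) →
      Equiv (prod H (nest L (idt a b))) (prod (H.renameOut b a) (nest L unit))

/-- Rename the free edge names of `G` along `rn`. -/
def freeNameB (G : Pretensor σ) (a : EdgeName) : Bool :=
  (G.edgeCount (DirEdge.out a) != 0) ^^ (G.edgeCount (DirEdge.inp a) != 0)

end Pretensor

/-- Rename the free edge names of `G` along `rn`. -/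
def renameFree {σ : Type} (rn : EdgeName → EdgeName) (G : Pretensor σ) : Pretensor σ :=
  G.rename (fun a => if G.freeNameB a then rn a else a) id

/-- `fr` is a freshness function for `G`: names occurring in `G` are mapped
to names not occurring in `G`. -/
def Freshness.IsFreshFor {σ : Type} (fr : Freshness) (G : Pretensor σ) : Prop :=
  (∀ a ∈ G.edgeNames, fr.em a ∉ G.edgeNames) ∧ (∀ A ∈ G.boxNames, fr.bm A ∉ G.boxNames)

/-- The four !-box operations. -/
inductive BOp : Type
  | exp (A : BoxName) (fr : Freshness)
  | kill (A : BoxName)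
  | copy (A : BoxName) (fr : Freshness)
  | drop (A : BoxName)

/-- Apply a !-box operation. -/
def BOp.app {σ : Type} : BOp → Pretensor σ → Pretensor σ
  | .exp A fr, G => G.exp A fr
  | .kill A, G => G.kill A
  | .copy A fr, G => G.copy A fr
  | .drop A, G => G.drop A

/-- A !-box operation is applied appropriately: its freshness function (if any)
is a freshness function for the expression it is applied to. -/
def BOp.OK {σ : Type} : BOp → Pretensor σ → Prop
  | .exp _ fr, G => fr.IsFreshFor G
  | .copy _ fr, G => fr.IsFreshFor G
  | _, _ => True

def BOp.isExpKill : BOp → Prop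
  | .exp _ _ => True
  | .kill _ => True
  | _ => False

def BOp.notDrop : BOp → Prop
  | .drop _ => False
  | _ => True

/-- Apply a list of !-box operations, left to right. -/
def applyOps {σ : Type} : List BOp → Pretensor σ → Pretensor σ
  | [], G => G
  | op :: rest, G => applyOps rest (op.app G)

/-- Each operation in the list is applied appropriately. -/
def OpsOK {σ : Type} : List BOp → Pretensor σ → Prop
  | [], _ => True
  | op :: rest, G => op.OK G ∧ OpsOK rest (op.app G)

/-- An instantiation of `G`: a finite composite of (appropriately applied)
`Exp` and `Kill` operations whose result contains no !-boxes. -/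
def IsInst {σ : Type} (i : List BOp) (G : Pretensor σ) : Prop :=
  (∀ op ∈ i, op.isExpKill) ∧ OpsOK i G ∧ (applyOps i G).IsConcrete

/-- Compatible boundaries: identical free edges, the same !-boxes with the same
immediate-nesting relation, and equal contexts on free edges. -/
def Compatible {σ : Type} (G H : Pretensor σ) : Prop :=
  (∀ d, G.freeDir d ↔ H.freeDir d) ∧
  (∀ A, G.boxCount A ≠ 0 ↔ H.boxCount A ≠ 0) ∧
  (∀ A B, G.Prec A B ↔ H.Prec A B) ∧
  (∀ d, G.freeDir d → G.ctxOf d = H.ctxOf d)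

/-- The set of concrete instances of the !-tensor equation `G = H`. -/
def ConcInst {σ : Type} (G H : Pretensor σ) : Set (Pretensor σ × Pretensor σ) :=
  {p | ∃ i : List BOp, IsInst i G ∧ p = (applyOps i G, applyOps i H)}

end BangTensor

/-!
If `A` does not occur in `G` (equivalently in `H`), weakening changes nothing. Otherwise F2 makes
`A` occur exactly once in `G` and in `H`, and F1/F2 for the weakened expressions force `K` to share
no directed edge and no !-box with `G` or `H`. Weakening then keeps every edge and !-box of `G` in
its old context and adds those of `K`, with the context they have in `K` followed by `A` and the
!-boxes enclosing `A`. Under F2 the immediate-nesting relation determines the whole chain of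
enclosing !-boxes, so `A` has the same enclosing !-boxes in `G` and `H`, and each compatibility
condition transfers to the weakened expressions.
-/

namespace BangTensor

theorem DirEdge.partner_partner (d : DirEdge) : d.partner.partner = d := by
  cases d <;> rfl

theorem EdgeTerm.ectx_eq_none_iff {e : EdgeTerm} {d : DirEdge} :
    e.ectx d = none ↔ e.count d = 0 := by
  induction e with
  | eps => simp [EdgeTerm.ectx, EdgeTerm.count]
  | edge d' => by_cases h : d' = d <;> simp [EdgeTerm.ectx, EdgeTerm.count, h]
  | cw e A ih | acw e A ih => simpa [EdgeTerm.ectx, EdgeTerm.count] using ih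
  | cat e f ihe ihf =>
    cases he : e.ectx d <;> simp_all [EdgeTerm.ectx, EdgeTerm.count, Option.orElse]

namespace Pretensor

variable {σ : Type}

theorem ctx2_eq_none_iff {G : Pretensor σ} {d : DirEdge} :
    G.ctx2 d = none ↔ G.edgeCount d = 0 := by
  induction G with
  | unit => simp [ctx2, edgeCount]
  | idt a b =>
    by_cases h₁ : d = DirEdge.out a <;> by_cases h₂ : d = DirEdge.inp b <;>
      simp [ctx2, edgeCount, h₁, h₂]
  | gen φ e => simp [ctx2, edgeCount, EdgeTerm.ectx_eq_none_iff]
  | box G A ih => simpa [ctx2, edgeCount] using ih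
  | prod G H ihG ihH => cases hG : G.ctx2 d <;> simp_all [ctx2, edgeCount, Option.orElse]

theorem boxCtx_eq_none_iff {G : Pretensor σ} {B : BoxName} :
    G.boxCtx B = none ↔ G.boxCount B = 0 := by
  induction G with
  | unit | idt | gen => simp [boxCtx, boxCount]
  | box G C ih => by_cases h : C = B <;> simp [boxCtx, boxCount, h, ih]
  | prod G H ihG ihH => cases hG : G.boxCtx B <;> simp_all [boxCtx, boxCount, Option.orElse]

theorem boxCtx_parent {G : Pretensor σ} (hG : ∀ X, G.boxCount X ≤ 1) {A B : BoxName}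
    {l : List BoxName} (h : G.boxCtx A = some (B :: l)) : G.boxCtx B = some l := by
  induction G generalizing l with
  | unit | idt | gen => simp [boxCtx] at h
  | box G C ih =>
    by_cases hCA : C = A
    · simp [boxCtx, hCA] at h
    rw [boxCtx, if_neg hCA, Option.map_eq_some_iff] at h
    obtain ⟨l', hl', hl⟩ := h
    rcases l' with _ | ⟨B', t⟩
    · obtain ⟨rfl, rfl⟩ : C = B ∧ [] = l := by simpa using hl
      simp [boxCtx]
    · obtain ⟨rfl, rfl⟩ : B' = B ∧ t ++ [C] = l := by simpa using hl
      have hGB := ih (fun X => (Nat.le_add_left _ _).trans (hG X)) hl'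
      -- `B` occurs in `G`, so by F2 it cannot also name the enclosing box `C`.
      have hCB : C ≠ B' := by
        rintro rfl
        have h₁ := hG C
        have h₂ : G.boxCount C ≠ 0 := by simp [← boxCtx_eq_none_iff, hGB]
        simp [boxCount] at h₁
        omega
      simp [boxCtx, hCB, hGB]
  | prod G H ihG ihH =>
    have hG' : ∀ X, G.boxCount X ≤ 1 := fun X => (Nat.le_add_right _ _).trans (hG X)
    have hH' : ∀ X, H.boxCount X ≤ 1 := fun X => (Nat.le_add_left _ _).trans (hG X)
    cases hGA : G.boxCtx A with
    | some v =>
      simp only [boxCtx, hGA, Option.orElse, Option.some.injEq] at h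
      subst h
      simp [boxCtx, ihG hG' hGA, Option.orElse]
    | none =>
      simp only [boxCtx, hGA, Option.orElse] at h
      have hHB := ihH hH' h
      have hGB : G.boxCtx B = none := by
        rw [boxCtx_eq_none_iff]
        have h₁ := hG B
        have h₂ : H.boxCount B ≠ 0 := by simp [← boxCtx_eq_none_iff, hHB]
        simp [boxCount] at h₁
        omega
      simp [boxCtx, hGB, hHB, Option.orElse]

theorem boxCtx_eq_of_prec_iff {G H : Pretensor σ}
    (hG : ∀ X, G.boxCount X ≤ 1) (hH : ∀ X, H.boxCount X ≤ 1)
    (hcount : ∀ X, G.boxCount X ≠ 0 ↔ H.boxCount X ≠ 0)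
    (hprec : ∀ X Y, G.Prec X Y ↔ H.Prec X Y) (X : BoxName) :
    G.boxCtx X = H.boxCtx X := by
  have key : ∀ (l l' : List BoxName) (X : BoxName),
      G.boxCtx X = some l → H.boxCtx X = some l' → l = l' := by
    intro l
    induction l with
    | nil =>
      rintro (_ | ⟨Y, t⟩) X hl hl'
      · rfl
      · obtain ⟨_, h⟩ := (hprec X Y).2 ⟨t, hl'⟩
        simp [hl] at h
    | cons Y t ih =>
      intro l' X hl hl'
      obtain ⟨t', ht'⟩ := (hprec X Y).1 ⟨t, hl⟩
      rw [hl'] at ht'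
      cases ht'
      rw [ih t' Y (boxCtx_parent hG hl) (boxCtx_parent hH hl')]
  have hnone : G.boxCtx X = none ↔ H.boxCtx X = none := by
    simpa only [boxCtx_eq_none_iff, not_iff_not] using hcount X
  rcases hGX : G.boxCtx X with _ | l <;> rcases hHX : H.boxCtx X with _ | l'
  · rfl
  · simp [hGX, hHX] at hnone
  · simp [hGX, hHX] at hnone
  · rw [key l l' X hGX hHX]

section wk

variable {A : BoxName} {K G : Pretensor σ}

theorem wk_eq_self_of_boxCount_eq_zero (h : G.boxCount A = 0) : wk A K G = G := by
  induction G with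
  | unit | idt | gen => rfl
  | box G C ih =>
    simp only [boxCount, Nat.add_eq_zero_iff, ite_eq_right_iff, one_ne_zero] at h
    rw [wk, if_neg h.1, ih h.2]
  | prod G H ihG ihH =>
    simp only [boxCount, Nat.add_eq_zero_iff] at h
    rw [wk, ihG h.1, ihH h.2]

theorem edgeCount_wk (hA : G.boxCount A ≤ 1) (d : DirEdge) :
    (wk A K G).edgeCount d = G.edgeCount d + G.boxCount A * K.edgeCount d := by
  induction G with
  | unit | idt | gen => simp [wk, boxCount]
  | box G C ih =>
    by_cases h : C = A
    · subst h
      have hG0 : G.boxCount C = 0 := by simp [boxCount] at hA; omega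
      simp [wk, edgeCount, boxCount, hG0]
    · simp only [boxCount, if_neg h, zero_add] at hA
      simp [wk, edgeCount, boxCount, h, ih hA]
  | prod G H ihG ihH =>
    simp only [boxCount] at hA
    simp only [wk, edgeCount, boxCount, ihG (by omega), ihH (by omega)]
    ring

theorem boxCount_wk (hA : G.boxCount A ≤ 1) (B : BoxName) :
    (wk A K G).boxCount B = G.boxCount B + G.boxCount A * K.boxCount B := by
  induction G with
  | unit | idt | gen => simp [wk, boxCount]
  | box G C ih =>
    by_cases h : C = A
    · subst h
      have hG0 : G.boxCount C = 0 := by simp [boxCount] at hA; omega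
      simp [wk, boxCount, hG0]
      omega
    · simp only [boxCount, if_neg h, zero_add] at hA
      simp [wk, boxCount, h, ih hA]
      omega
  | prod G H ihG ihH =>
    simp only [boxCount] at hA
    simp only [wk, boxCount, ihG (by omega), ihH (by omega)]
    ring

theorem ctx2_wk_eq_ctx2 {d : DirEdge} (hK : K.edgeCount d = 0) :
    (wk A K G).ctx2 d = G.ctx2 d := by
  induction G with
  | unit | idt | gen => rfl
  | box G C ih =>
    by_cases h : C = A
    · simp only [wk, ctx2, h, if_true, ctx2_eq_none_iff.2 hK]
      cases G.ctx2 d <;> rfl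
    · simp [wk, ctx2, h, ih]
  | prod G H ihG ihH => simp [wk, ctx2, ihG, ihH]

theorem ctx2_wk_eq_bind_boxCtx {d : DirEdge} (hG : G.edgeCount d = 0) :
    (wk A K G).ctx2 d =
      (G.boxCtx A).bind fun l => (K.ctx2 d).map fun p => (p.1, p.2 ++ A :: l) := by
  induction G with
  | unit | idt | gen => simp [wk, ctx2_eq_none_iff.2 hG, boxCtx]
  | box G C ih =>
    simp only [edgeCount] at hG
    by_cases h : C = A
    · simp [wk, ctx2, boxCtx, h, ctx2_eq_none_iff.2 hG, Option.orElse]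
    · simp [wk, ctx2, boxCtx, h, ih hG, Option.bind_map, Function.comp_def]
  | prod G H ihG ihH =>
    simp only [edgeCount, Nat.add_eq_zero_iff] at hG
    simp only [wk, ctx2, boxCtx, ihG hG.1, ihH hG.2]
    cases G.boxCtx A <;> cases K.ctx2 d <;> simp [Option.orElse]

theorem boxCtx_wk_eq_boxCtx {B : BoxName} (hK : K.boxCount B = 0) :
    (wk A K G).boxCtx B = G.boxCtx B := by
  induction G with
  | unit | idt | gen => rfl
  | box G C ih =>
    by_cases h : C = A
    · simp only [wk, boxCtx, h, if_true, boxCtx_eq_none_iff.2 hK]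
      cases G.boxCtx B <;> rfl
    · simp [wk, boxCtx, h, ih]
  | prod G H ihG ihH => simp [wk, boxCtx, ihG, ihH]

theorem boxCtx_wk_eq_bind_boxCtx {B : BoxName} (hG : G.boxCount B = 0) :
    (wk A K G).boxCtx B = (G.boxCtx A).bind fun l => (K.boxCtx B).map (· ++ A :: l) := by
  induction G with
  | unit | idt | gen => simp [wk, boxCtx]
  | box G C ih =>
    simp only [boxCount, Nat.add_eq_zero_iff, ite_eq_right_iff, one_ne_zero, imp_false] at hG
    obtain ⟨hCB, hG⟩ := hG
    by_cases h : C = A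
    · subst h
      simp [wk, boxCtx, hCB, boxCtx_eq_none_iff.2 hG, Option.orElse]
    · simp [wk, boxCtx, h, hCB, ih hG, Option.bind_map, Function.comp_def]
  | prod G H ihG ihH =>
    simp only [boxCount, Nat.add_eq_zero_iff] at hG
    simp only [wk, boxCtx, ihG hG.1, ihH hG.2]
    cases G.boxCtx A <;> cases K.boxCtx B <;> simp [Option.orElse]

theorem boxCtx_wk_congr {H : Pretensor σ} (hGH : ∀ X, G.boxCtx X = H.boxCtx X)
    (hdisj : ∀ X, G.boxCount X = 0 ∨ K.boxCount X = 0) (B : BoxName) :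
    (wk A K G).boxCtx B = (wk A K H).boxCtx B := by
  rcases hdisj B with hG | hK
  · have hH : H.boxCount B = 0 := by rw [← boxCtx_eq_none_iff, ← hGH, boxCtx_eq_none_iff, hG]
    rw [boxCtx_wk_eq_bind_boxCtx hG, boxCtx_wk_eq_bind_boxCtx hH, hGH]
  · rw [boxCtx_wk_eq_boxCtx hK, boxCtx_wk_eq_boxCtx hK, hGH]

theorem occursDir_wk (hA : G.boxCount A = 1) (d : DirEdge) :
    (wk A K G).occursDir d ↔ G.occursDir d ∨ K.occursDir d := by
  simp only [occursDir, edgeCount_wk hA.le, hA, one_mul, ne_eq, Nat.add_eq_zero_iff, not_and_or]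

theorem boxCount_wk_ne_zero_iff (hA : G.boxCount A = 1) (B : BoxName) :
    (wk A K G).boxCount B ≠ 0 ↔ G.boxCount B ≠ 0 ∨ K.boxCount B ≠ 0 := by
  simp only [boxCount_wk hA.le, hA, one_mul, ne_eq, Nat.add_eq_zero_iff, not_and_or]

theorem not_occursDir_and_of_isTensorExpr_wk (hA : G.boxCount A = 1)
    (hwk : (wk A K G).IsTensorExpr) (d : DirEdge) : ¬(G.occursDir d ∧ K.occursDir d) := by
  have h := hwk.1 d
  rw [edgeCount_wk hA.le, hA, one_mul] at h
  simp only [occursDir]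
  omega

theorem boxCount_eq_zero_or_of_isTensorExpr_wk (hA : G.boxCount A = 1)
    (hwk : (wk A K G).IsTensorExpr) (B : BoxName) : G.boxCount B = 0 ∨ K.boxCount B = 0 := by
  have h := hwk.2.1 B
  rw [boxCount_wk hA.le, hA, one_mul] at h
  omega

end wk

end Pretensor

open Pretensor in
theorem Compatible.wk {σ : Type} {G H K : Pretensor σ} {A : BoxName} (hcmp : Compatible G H)
    (hG : ∀ B, G.boxCount B ≤ 1) (hH : ∀ B, H.boxCount B ≤ 1)
    (hAG : G.boxCount A = 1) (hAH : H.boxCount A = 1)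
    (hedgeG : ∀ d, ¬(G.occursDir d ∧ K.occursDir d))
    (hedgeH : ∀ d, ¬(H.occursDir d ∧ K.occursDir d))
    (hbox : ∀ B, G.boxCount B = 0 ∨ K.boxCount B = 0) :
    Compatible (wk A K G) (wk A K H) := by
  obtain ⟨hfree, hcount, hprec, hctx⟩ := hcmp
  have hboxCtx := boxCtx_eq_of_prec_iff hG hH hcount hprec
  refine ⟨fun d => ?_, fun B => ?_, fun B C => ?_, fun d hd => ?_⟩
  · have hd := hfree d
    have hd' := hfree d.partner
    have := hedgeG d; have := hedgeG d.partner; have := hedgeH d; have := hedgeH d.partner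
    simp only [freeDir, DirEdge.partner_partner, occursDir_wk hAG, occursDir_wk hAH] at hd hd' ⊢
    clear hfree hctx
    by_cases hK : K.occursDir d <;> by_cases hK' : K.occursDir d.partner <;> simp_all
  · rw [boxCount_wk_ne_zero_iff hAG, boxCount_wk_ne_zero_iff hAH, hcount]
  · simp only [Prec, boxCtx_wk_congr hboxCtx hbox]
  · simp only [ctxOf]
    by_cases hK : K.occursDir d
    · have hGd : G.edgeCount d = 0 := not_not.1 fun h => hedgeG d ⟨h, hK⟩
      have hHd : H.edgeCount d = 0 := not_not.1 fun h => hedgeH d ⟨h, hK⟩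
      rw [ctx2_wk_eq_bind_boxCtx hGd, ctx2_wk_eq_bind_boxCtx hHd, hboxCtx]
    · have hGfree : G.freeDir d :=
        ⟨((occursDir_wk hAG d).1 hd.1).resolve_right hK,
          fun h => hd.2 ((occursDir_wk hAG _).2 (Or.inl h))⟩
      have := hctx d hGfree
      simp only [ctxOf] at this
      rw [ctx2_wk_eq_ctx2 (not_not.1 hK), ctx2_wk_eq_ctx2 (not_not.1 hK), this]

/-- If `G` and `H` are compatible !-tensors (identical free
edge names, the same !-box names with identical immediate-nesting relation, and
equal contexts on all free edge names), then `Wk_A^K(G)` and `Wk_A^K(H)` are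
compatible !-tensors. -/
theorem wk_preserves_compatible {σ : Type} (G H K : Pretensor σ) (A : BoxName)
    (hG : Pretensor.IsTensorExpr G) (hH : Pretensor.IsTensorExpr H)
    (hwkG : Pretensor.IsTensorExpr (Pretensor.wk A K G))
    (hwkH : Pretensor.IsTensorExpr (Pretensor.wk A K H))
    (hcmp : Compatible G H) :
    Compatible (Pretensor.wk A K G) (Pretensor.wk A K H) := by
  by_cases hAG : G.boxCount A = 0
  · have hAH : H.boxCount A = 0 := by simpa [hAG] using hcmp.2.1 A
    rwa [Pretensor.wk_eq_self_of_boxCount_eq_zero hAG,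
      Pretensor.wk_eq_self_of_boxCount_eq_zero hAH]
  have hAG1 : G.boxCount A = 1 := by have := hG.2.1 A; omega
  have hAH1 : H.boxCount A = 1 := by have := hH.2.1 A; have := (hcmp.2.1 A).1 hAG; omega
  exact hcmp.wk hG.2.1 hH.2.1 hAG1 hAH1
    (Pretensor.not_occursDir_and_of_isTensorExpr_wk hAG1 hwkG)
    (Pretensor.not_occursDir_and_of_isTensorExpr_wk hAH1 hwkH)
    (Pretensor.boxCount_eq_zero_or_of_isTensorExpr_wk hAG1 hwkG)

end BangTensor
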